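/- Let ψ : ℝ → ℝⁿ be C² with ψ ∈ L², ψ′ ∈ L², and suppose there are C_ψ > 0, a > 0 with |ψ''(ξ)| ≤ C_ψ e^{−a|ξ|} for all ξ ∈ ℝ. Define N(γ)(ξ) = ψ(ξ − γ) − ψ(ξ) + γψ′(ξ). Then there exists K > 0 such that ‖N(γ)‖_{L²} ≤ Kγ² for all γ ∈ ℝ, and ‖N(γ_A) − N(γ_B)‖_{L²} ≤ K(|γ_A| + |γ_B|)|γ_A − γ_B| for all γ_A, γ_B ∈ ℝ. -/

import Mathlib

open MeasureTheory

noncomputable section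

abbrev En (n : ℕ) : Type := EuclideanSpace ℝ (Fin n)

/-- membership in `L²(ℝ;ℝⁿ)` -/
def memL2 {n : ℕ} (f : ℝ → En n) : Prop := MemLp f 2 volume

/-- the `L²` norm -/
def l2norm {n : ℕ} (f : ℝ → En n) : ℝ := (eLpNorm f 2 volume).toReal

/-- the `L²` inner product -/
def l2inner {n : ℕ} (f g : ℝ → En n) : ℝ := ∫ ξ, (inner ℝ (f ξ) (g ξ) : ℝ)

/-- `f` is locally absolutely continuous with derivative `f'` -/
def hasWeakDeriv {n : ℕ} (f f' : ℝ → En n) : Prop :=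
  LocallyIntegrable f' volume ∧ ∀ x y : ℝ, f y - f x = ∫ t in x..y, f' t

/-- membership in `H¹`, with the derivative recorded explicitly -/
def memH1 {n : ℕ} (f f' : ℝ → En n) : Prop :=
  hasWeakDeriv f f' ∧ memL2 f ∧ memL2 f'

/-- the `H¹` norm -/
def h1norm {n : ℕ} (f f' : ℝ → En n) : ℝ :=
  Real.sqrt ((l2norm f)^2 + (l2norm f')^2)

/-- membership in `H²`, with both derivatives recorded explicitly -/
def memH2 {n : ℕ} (f f' f'' : ℝ → En n) : Prop :=
  memH1 f f' ∧ memH1 f' f''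

/-- the `H²` norm -/
def h2norm {n : ℕ} (f f' f'' : ℝ → En n) : ℝ :=
  Real.sqrt ((l2norm f)^2 + (l2norm f')^2 + (l2norm f'')^2)

/-!
Write `Tₛf = f(· - s)` and `R(h) = T_h ψ - ψ + h ψ'`, so that `N(γ) = R(γ)`. Since
`N(γ_A) - N(γ_B) = T_{γ_B} R(γ_A - γ_B) - (γ_A - γ_B) (T_{γ_B} ψ' - ψ')` and translations are
isometries of `L²`, it suffices to show `‖R(h)‖ ≤ K h²` and `‖T_s ψ' - ψ'‖ ≤ K |s|`.
For `|h|, |s| ≤ 1` the mean value theorem and `e^{-a|ξ - t|} ≤ e^{a} e^{-a|ξ|}` for `|t| ≤ 1`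
bound both pointwise by a multiple of `e^{-a|ξ|}`; for `|h|, |s| ≥ 1` the triangle inequality
with `ψ, ψ' ∈ L²` suffices.
-/

open MeasureTheory Real Set

lemma integrable_exp_neg_mul_abs {b : ℝ} (hb : 0 < b) :
    Integrable (fun x : ℝ => exp (-b * |x|)) := by
  have hIoi : IntegrableOn (fun x : ℝ => exp (-b * |x|)) (Ioi 0) := by
    refine (exp_neg_integrableOn_Ioi 0 hb).congr_fun (fun x hx => ?_) measurableSet_Ioi
    simp [abs_of_pos (mem_Ioi.mp hx)]
  rw [← integrableOn_univ, ← Iio_union_Ici (a := (0 : ℝ)), integrableOn_union,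
    integrableOn_Ici_iff_integrableOn_Ioi]
  refine ⟨?_, hIoi⟩
  rw [← (Measure.measurePreserving_neg (volume : Measure ℝ)).integrableOn_comp_preimage
      (Homeomorph.neg ℝ).measurableEmbedding]
  simpa only [Function.comp_def, abs_neg, neg_preimage, neg_Iio, neg_zero] using hIoi

lemma memLp_two_exp_neg_mul_abs {a : ℝ} (ha : 0 < a) :
    MemLp (fun x : ℝ => exp (-a * |x|)) 2 volume := by
  refine (memLp_two_iff_integrable_sq (by fun_prop : Continuous _).aestronglyMeasurable).2 ?_
  convert integrable_exp_neg_mul_abs (mul_pos two_pos ha) using 2 with x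
  rw [← exp_nat_mul]
  ring_nf

lemma exp_neg_mul_abs_le_of_abs_sub_le {a r ξ t : ℝ} (ha : 0 ≤ a) (h : |t - ξ| ≤ r) :
    exp (-a * |t|) ≤ exp (a * r) * exp (-a * |ξ|) := by
  rw [← exp_add, exp_le_exp]
  nlinarith [abs_sub_abs_le_abs_sub ξ t, abs_sub_comm ξ t]

section PointwiseBounds

variable {E : Type*} [NormedAddCommGroup E] [NormedSpace ℝ E] {C a : ℝ}

def taylorRemainder (f f' : ℝ → E) (h : ℝ) : ℝ → E := fun ξ => f (ξ - h) - f ξ + h • f' ξ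

lemma norm_comp_sub_sub_le {f f' : ℝ → E} (hf : ∀ t, HasDerivAt f (f' t) t) (ha : 0 ≤ a)
    (hbound : ∀ t, ‖f' t‖ ≤ C * exp (-a * |t|)) (ξ s : ℝ) :
    ‖f (ξ - s) - f ξ‖ ≤ C * exp (a * |s|) * |s| * exp (-a * |ξ|) := by
  have hC : 0 ≤ C := by simpa using (norm_nonneg _).trans (hbound 0)
  have hderiv_le : ∀ t ∈ Metric.closedBall ξ |s|,
      ‖f' t‖ ≤ C * exp (a * |s|) * exp (-a * |ξ|) := fun t ht =>
    calc ‖f' t‖ ≤ C * exp (-a * |t|) := hbound t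
      _ ≤ C * (exp (a * |s|) * exp (-a * |ξ|)) := by
        gcongr
        exact exp_neg_mul_abs_le_of_abs_sub_le ha (by simpa [Real.dist_eq] using ht)
      _ = _ := by ring
  have hmem : ξ - s ∈ Metric.closedBall ξ |s| := by simp
  have := (convex_closedBall ξ |s|).norm_image_sub_le_of_norm_hasDerivWithin_le
    (fun t _ => (hf t).hasDerivWithinAt) hderiv_le (Metric.mem_closedBall_self (abs_nonneg s)) hmem
  simpa [Real.norm_eq_abs, mul_right_comm] using this

lemma norm_taylorRemainder_le {f f' f'' : ℝ → E} (hf : ∀ t, HasDerivAt f (f' t) t)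
    (hf' : ∀ t, HasDerivAt f' (f'' t) t) (ha : 0 ≤ a)
    (hbound : ∀ t, ‖f'' t‖ ≤ C * exp (-a * |t|)) (ξ h : ℝ) :
    ‖taylorRemainder f f' h ξ‖ ≤ C * exp (a * |h|) * h ^ 2 * exp (-a * |ξ|) := by
  have hC : 0 ≤ C := by simpa using (norm_nonneg _).trans (hbound 0)
  have hG : ∀ s, HasDerivAt (fun s => f (ξ - s) + s • f' ξ) (f' ξ - f' (ξ - s)) s := by
    intro s
    convert ((hf (ξ - s)).scomp s ((hasDerivAt_id s).const_sub ξ)).add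
      ((hasDerivAt_id s).smul_const (f' ξ)) using 1
    · rfl
    · simp only [neg_one_smul, one_smul]
      abel
  have hG_le : ∀ s ∈ Metric.closedBall (0 : ℝ) |h|,
      ‖f' ξ - f' (ξ - s)‖ ≤ C * exp (a * |h|) * |h| * exp (-a * |ξ|) := by
    intro s hs
    have hs' : |s| ≤ |h| := by simpa using hs
    rw [norm_sub_rev]
    refine (norm_comp_sub_sub_le hf' ha hbound ξ s).trans ?_
    gcongr
  have := (convex_closedBall (0 : ℝ) |h|).norm_image_sub_le_of_norm_hasDerivWithin_le
    (fun s _ => (hG s).hasDerivWithinAt) hG_le (Metric.mem_closedBall_self (abs_nonneg h))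
    (by simp : h ∈ Metric.closedBall (0 : ℝ) |h|)
  convert this using 1
  · simp only [taylorRemainder, sub_zero, zero_smul, add_zero]
    abel_nf
  · rw [sub_zero, Real.norm_eq_abs, ← sq_abs h]
    ring

end PointwiseBounds

section L2

variable {n : ℕ}

lemma l2norm_nonneg (f : ℝ → En n) : 0 ≤ l2norm f := ENNReal.toReal_nonneg

lemma memL2.comp_sub_right {f : ℝ → En n} (hf : memL2 f) (c : ℝ) :
    memL2 (fun ξ => f (ξ - c)) :=
  hf.comp_measurePreserving (measurePreserving_sub_right volume c)

lemma l2norm_comp_sub_right {f : ℝ → En n} (hf : memL2 f) (c : ℝ) :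
    l2norm (fun ξ => f (ξ - c)) = l2norm f :=
  congrArg ENNReal.toReal
    (eLpNorm_comp_measurePreserving hf.1 (measurePreserving_sub_right volume c))

lemma l2norm_add_le {f g : ℝ → En n} (hf : memL2 f) (hg : memL2 g) :
    l2norm (f + g) ≤ l2norm f + l2norm g :=
  ENNReal.toReal_le_add (eLpNorm_add_le hf.1 hg.1 one_le_two) hf.2.ne hg.2.ne

lemma l2norm_sub_le {f g : ℝ → En n} (hf : memL2 f) (hg : memL2 g) :
    l2norm (f - g) ≤ l2norm f + l2norm g :=
  ENNReal.toReal_le_add (eLpNorm_sub_le hf.1 hg.1 one_le_two) hf.2.ne hg.2.ne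

lemma l2norm_smul (c : ℝ) (f : ℝ → En n) : l2norm (c • f) = |c| * l2norm f := by
  simp [l2norm, eLpNorm_const_smul, Real.norm_eq_abs]

lemma l2norm_le_mul_of_norm_le {f : ℝ → En n} {g : ℝ → ℝ} (hg : MemLp g 2 volume) {c : ℝ}
    (hc : 0 ≤ c) (h : ∀ ξ, ‖f ξ‖ ≤ c * g ξ) :
    l2norm f ≤ c * (eLpNorm g 2 volume).toReal := by
  have hcg : MemLp (c • g) 2 volume := hg.const_smul c
  calc l2norm f ≤ (eLpNorm (c • g) 2 volume).toReal :=
        ENNReal.toReal_mono hcg.2.ne (eLpNorm_mono_real h)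
    _ = c * (eLpNorm g 2 volume).toReal := by
        simp [eLpNorm_const_smul, Real.norm_eq_abs, abs_of_nonneg hc]

end L2

section ShiftEstimates

variable {n : ℕ} {C a : ℝ}

lemma exists_l2norm_comp_sub_sub_le {f f' : ℝ → En n} (hf : ∀ t, HasDerivAt f (f' t) t)
    (hfL2 : memL2 f) (ha : 0 < a) (hbound : ∀ t, ‖f' t‖ ≤ C * exp (-a * |t|)) :
    ∃ K ≥ 0, ∀ s, l2norm (fun ξ => f (ξ - s) - f ξ) ≤ K * |s| := by
  have hC : 0 ≤ C := by simpa using (norm_nonneg _).trans (hbound 0)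
  set W := (eLpNorm (fun x : ℝ => exp (-a * |x|)) 2 volume).toReal
  have hW : 0 ≤ W := ENNReal.toReal_nonneg
  refine ⟨max (C * exp a * W) (2 * l2norm f), le_max_of_le_right
    (mul_nonneg zero_le_two (l2norm_nonneg f)), fun s => ?_⟩
  rcases le_or_gt |s| 1 with hs | hs
  · have hpt : ∀ ξ, ‖f (ξ - s) - f ξ‖ ≤ C * exp a * |s| * exp (-a * |ξ|) := fun ξ =>
      (norm_comp_sub_sub_le hf ha.le hbound ξ s).trans (by gcongr; nlinarith)
    calc l2norm _ ≤ C * exp a * |s| * W :=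
          l2norm_le_mul_of_norm_le (memLp_two_exp_neg_mul_abs ha) (by positivity) hpt
      _ = C * exp a * W * |s| := by ring
      _ ≤ _ := by gcongr; exact le_max_left _ _
  · calc l2norm (fun ξ => f (ξ - s) - f ξ)
          ≤ l2norm (fun ξ => f (ξ - s)) + l2norm f := l2norm_sub_le (hfL2.comp_sub_right s) hfL2
      _ = 2 * l2norm f * 1 := by rw [l2norm_comp_sub_right hfL2]; ring
      _ ≤ _ := by gcongr; exact le_max_right _ _

lemma exists_l2norm_taylorRemainder_le {f f' f'' : ℝ → En n}
    (hf : ∀ t, HasDerivAt f (f' t) t) (hf' : ∀ t, HasDerivAt f' (f'' t) t) (hfL2 : memL2 f)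
    (hf'L2 : memL2 f') (ha : 0 < a) (hbound : ∀ t, ‖f'' t‖ ≤ C * exp (-a * |t|)) :
    ∃ K ≥ 0, ∀ h, l2norm (taylorRemainder f f' h) ≤ K * h ^ 2 := by
  have hC : 0 ≤ C := by simpa using (norm_nonneg _).trans (hbound 0)
  set W := (eLpNorm (fun x : ℝ => exp (-a * |x|)) 2 volume).toReal
  have hW : 0 ≤ W := ENNReal.toReal_nonneg
  have hf_nn := l2norm_nonneg f
  have hf'_nn := l2norm_nonneg f'
  refine ⟨max (C * exp a * W) (2 * l2norm f + l2norm f'), le_max_of_le_right (by positivity),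
    fun h => ?_⟩
  rcases le_or_gt |h| 1 with hh | hh
  · have hpt : ∀ ξ, ‖taylorRemainder f f' h ξ‖ ≤ C * exp a * h ^ 2 * exp (-a * |ξ|) :=
      fun ξ => (norm_taylorRemainder_le hf hf' ha.le hbound ξ h).trans
        (by gcongr; nlinarith)
    calc l2norm _ ≤ C * exp a * h ^ 2 * W :=
          l2norm_le_mul_of_norm_le (memLp_two_exp_neg_mul_abs ha) (by positivity) hpt
      _ = C * exp a * W * h ^ 2 := by ring
      _ ≤ _ := by gcongr; exact le_max_left _ _
  · have hh2 : |h| ≤ h ^ 2 := by rw [← sq_abs]; nlinarith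
    calc l2norm (taylorRemainder f f' h)
          ≤ l2norm (fun ξ => f (ξ - h) - f ξ) + l2norm (h • f') :=
          l2norm_add_le ((hfL2.comp_sub_right h).sub hfL2) (hf'L2.const_smul h)
      _ ≤ (l2norm (fun ξ => f (ξ - h)) + l2norm f) + |h| * l2norm f' := by
          rw [l2norm_smul]
          gcongr
          exact l2norm_sub_le (hfL2.comp_sub_right h) hfL2
      _ ≤ (2 * l2norm f + l2norm f') * h ^ 2 := by
          rw [l2norm_comp_sub_right hfL2]
          nlinarith
      _ ≤ _ := by gcongr; exact le_max_right _ _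

lemma memL2_taylorRemainder {f f' : ℝ → En n} (hfL2 : memL2 f) (hf'L2 : memL2 f') (h : ℝ) :
    memL2 (taylorRemainder f f' h) :=
  ((hfL2.comp_sub_right h).sub hfL2).add (hf'L2.const_smul h)

lemma l2norm_taylorRemainder_sub_le {f f' : ℝ → En n} (hfL2 : memL2 f) (hf'L2 : memL2 f')
    (γA γB : ℝ) :
    l2norm (taylorRemainder f f' γA - taylorRemainder f f' γB) ≤
      l2norm (taylorRemainder f f' (γA - γB))
        + |γA - γB| * l2norm (fun ξ => f' (ξ - γB) - f' ξ) := by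
  set R := taylorRemainder f f' (γA - γB)
  have hR : memL2 R := memL2_taylorRemainder hfL2 hf'L2 _
  have hdecomp : taylorRemainder f f' γA - taylorRemainder f f' γB =
      (fun ξ => R (ξ - γB)) - (γA - γB) • fun ξ => f' (ξ - γB) - f' ξ := by
    ext1 ξ
    simp only [R, taylorRemainder, Pi.sub_apply, Pi.smul_apply, sub_sub, add_sub_cancel,
      smul_sub, sub_smul]
    abel
  rw [hdecomp, ← l2norm_comp_sub_right hR γB, ← l2norm_smul]
  exact l2norm_sub_le (hR.comp_sub_right γB) (((hf'L2.comp_sub_right γB).sub hf'L2).const_smul _)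

end ShiftEstimates

theorem statement11_general {n : ℕ} (ψ : ℝ → En n) (hψC2 : ContDiff ℝ 2 ψ)
    (hψL2 : memL2 ψ) (hψ'L2 : memL2 (deriv ψ))
    (Cψ a : ℝ) (ha : 0 < a)
    (hdecay : ∀ ξ : ℝ, ‖deriv (deriv ψ) ξ‖ ≤ Cψ * Real.exp (-a * |ξ|)) :
    ∃ K > (0:ℝ),
      (∀ γ : ℝ, l2norm (fun ξ => ψ (ξ - γ) - ψ ξ + γ • deriv ψ ξ) ≤ K * γ^2) ∧
      (∀ γA γB : ℝ,
        l2norm (fun ξ => (ψ (ξ - γA) - ψ ξ + γA • deriv ψ ξ)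
            - (ψ (ξ - γB) - ψ ξ + γB • deriv ψ ξ)) ≤
          K * (|γA| + |γB|) * |γA - γB|) := by
  have hψ : ∀ t, HasDerivAt ψ (deriv ψ t) t :=
    fun t => (hψC2.differentiable two_ne_zero t).hasDerivAt
  have hψ' : ∀ t, HasDerivAt (deriv ψ) (deriv (deriv ψ) t) t :=
    fun t => (hψC2.differentiable_deriv_two t).hasDerivAt
  obtain ⟨K₁, hK₁, hR⟩ :=
    exists_l2norm_taylorRemainder_le hψ hψ' hψL2 hψ'L2 ha hdecay
  obtain ⟨K₂, hK₂, hT⟩ := exists_l2norm_comp_sub_sub_le hψ' hψ'L2 ha hdecay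
  refine ⟨K₁ + K₂ + 1, by positivity, fun γ => (hR γ).trans (by gcongr; linarith),
    fun γA γB => (l2norm_taylorRemainder_sub_le hψL2 hψ'L2 γA γB).trans ?_⟩
  have hL : |γA - γB| ≤ |γA| + |γB| := abs_sub γA γB
  calc _ ≤ K₁ * |γA - γB| ^ 2 + |γA - γB| * (K₂ * |γB|) := by
        rw [sq_abs]; gcongr
        · exact hR _
        · exact hT _
    _ ≤ (K₁ + K₂ + 1) * (|γA| + |γB|) * |γA - γB| := by
        have hA := abs_nonneg γA
        have hB := abs_nonneg γB
        have hAB := abs_nonneg (γA - γB)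
        nlinarith [mul_le_mul_of_nonneg_left hL (mul_nonneg hK₁ hAB),
          mul_nonneg (mul_nonneg hK₂ hAB) hA, mul_nonneg (add_nonneg hA hB) hAB]

/-- quadratic bounds for `N(γ) = ψ(·−γ) − ψ + γψ′`. -/
theorem statement11 {n : ℕ} (ψ : ℝ → En n) (hψC2 : ContDiff ℝ 2 ψ)
    (hψL2 : memL2 ψ) (hψ'L2 : memL2 (deriv ψ))
    (Cψ a : ℝ) (hCψ : 0 < Cψ) (ha : 0 < a)
    (hdecay : ∀ ξ : ℝ, ‖deriv (deriv ψ) ξ‖ ≤ Cψ * Real.exp (-a * |ξ|)) :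
    ∃ K > (0:ℝ),
      (∀ γ : ℝ, l2norm (fun ξ => ψ (ξ - γ) - ψ ξ + γ • deriv ψ ξ) ≤ K * γ^2) ∧
      (∀ γA γB : ℝ,
        l2norm (fun ξ => (ψ (ξ - γA) - ψ ξ + γA • deriv ψ ξ)
            - (ψ (ξ - γB) - ψ ξ + γB • deriv ψ ξ)) ≤
          K * (|γA| + |γB|) * |γA - γB|) :=
  statement11_general ψ hψC2 hψL2 hψ'L2 Cψ a ha hdecay
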